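/- arXiv:2302.11652 — 6 statements merged into one kernel-verified Lean document; each statement's English description precedes it below -/
import Mathlib

section
/- Let g : (0,∞) → ℝ be non-increasing, non-negative, and differentiable, and let p > 0 be an external market price. Consider the arbitrageur's profit function Φ(p₁) = p·(g(p₀) - g(p₁)) + ∫_{p₀}^{p₁} s g'(s) ds for a fixed current price p₀ > 0. Then Φ is maximized at p₁ = p (price discovery). -/
open MeasureTheory Set intervalIntegral

/-!
Moving the price from `p₁` to `p` changes the profit by
`∫_{p₁}^{p} (s - p) g'(s) ds`, obtained from the fundamental theorem of calculus for `g`. Since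
`g' ≤ 0`, the integrand has the sign of `p - s`, which makes this integral nonnegative whichever
side of `p` the price `p₁` lies on.
-/

lemma HasDerivAt.nonpos_of_antitoneOn_of_isOpen {g : ℝ → ℝ} {g' x : ℝ} {s : Set ℝ}
    (hd : HasDerivAt g g' x) (hg : AntitoneOn g s) (hs : IsOpen s) (hx : x ∈ s) : g' ≤ 0 :=
  hd.hasDerivWithinAt.nonpos_of_antitoneOn (hs.uniqueDiffOn (𝕜 := ℝ) x hx).accPt hg

lemma AntitoneOn.intervalIntegrable_deriv {g g' : ℝ → ℝ} {s : Set ℝ} {a b : ℝ}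
    (hg : AntitoneOn g s) (hs : IsOpen s) (hab : uIcc a b ⊆ s)
    (hderiv : ∀ x ∈ s, HasDerivAt g (g' x) x) : IntervalIntegrable g' volume a b := by
  have hcont : ContinuousOn (-g) (uIcc a b) := fun x hx =>
    (hderiv x (hab hx)).continuousAt.neg.continuousWithinAt
  have hmem : ∀ x ∈ Ioo (min a b) (max a b), x ∈ s := fun x hx => hab (Ioo_subset_Icc_self hx)
  have hneg : ∀ x ∈ Ioo (min a b) (max a b), 0 ≤ -g' x := fun x hx =>
    neg_nonneg.2 ((hderiv x (hmem x hx)).nonpos_of_antitoneOn_of_isOpen hg hs (hmem x hx))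
  simpa [Pi.neg_def] using (intervalIntegrable_deriv_of_nonneg hcont
    (fun x hx => (hderiv x (hmem x hx)).neg) hneg).neg

lemma integral_sub_right_mul_nonneg {f : ℝ → ℝ} {a b : ℝ} (hf : ∀ x ∈ uIcc a b, f x ≤ 0) :
    0 ≤ ∫ x in a..b, (x - b) * f x := by
  rcases le_total a b with hab | hba
  · exact integral_nonneg hab fun x hx =>
      mul_nonneg_of_nonpos_of_nonpos (by linarith [hx.2]) (hf x (Icc_subset_uIcc hx))
  · rw [integral_symm, ← intervalIntegral.integral_neg]
    exact integral_nonneg hba fun x hx =>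
      neg_nonneg.2 (mul_nonpos_of_nonneg_of_nonpos (by linarith [hx.1])
        (hf x (Icc_subset_uIcc' hx)))

theorem stmt3_general (g g' : ℝ → ℝ)
    (hderiv : ∀ s ∈ Ioi (0:ℝ), HasDerivAt g (g' s) s)
    (hanti : AntitoneOn g (Ioi 0))
    (hint : ∀ a b : ℝ, 0 < a → 0 < b → IntervalIntegrable (fun s => s * g' s) volume a b)
    (p₀ p : ℝ) (hp₀ : 0 < p₀) (hp : 0 < p) :
    ∀ p₁ : ℝ, 0 < p₁ →
      p * (g p₀ - g p₁) + (∫ s in p₀..p₁, s * g' s)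
        ≤ p * (g p₀ - g p) + ∫ s in p₀..p, s * g' s := by
  intro p₁ hp₁
  have hsub : uIcc p₁ p ⊆ Ioi 0 := fun x hx => (lt_min hp₁ hp).trans_le hx.1
  have hg'int : IntervalIntegrable g' volume p₁ p :=
    hanti.intervalIntegrable_deriv isOpen_Ioi hsub hderiv
  have hftc : ∫ s in p₁..p, g' s = g p - g p₁ :=
    integral_eq_sub_of_hasDerivAt (fun x hx => hderiv x (hsub hx)) hg'int
  have hgain : 0 ≤ ∫ s in p₁..p, (s - p) * g' s := integral_sub_right_mul_nonneg fun x hx =>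
    (hderiv x (hsub hx)).nonpos_of_antitoneOn_of_isOpen hanti isOpen_Ioi (hsub hx)
  have hgain_eq : ∫ s in p₁..p, (s - p) * g' s = (∫ s in p₁..p, s * g' s) - p * (g p - g p₁) := by
    simp_rw [sub_mul]
    rw [integral_sub (hint p₁ p hp₁ hp) (hg'int.const_mul p), intervalIntegral.integral_const_mul, hftc]
  have hadd := integral_add_adjacent_intervals (hint p₀ p₁ hp₀ hp₁) (hint p₁ p hp₁ hp)
  linarith

/-- **price discovery.** For a differentiable, non-increasing, non-negative
demand curve `g` with derivative `g'`, a fixed current price `p₀ > 0` and an external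
market price `p > 0`, the arbitrageur's profit
`Φ(p₁) = p·(g(p₀) - g(p₁)) + ∫_{p₀}^{p₁} s g'(s) ds` is maximized at `p₁ = p`. -/
theorem stmt3 (g g' : ℝ → ℝ)
    (hderiv : ∀ s ∈ Ioi (0:ℝ), HasDerivAt g (g' s) s)
    (hanti : AntitoneOn g (Ioi 0))
    (hnonneg : ∀ s ∈ Ioi (0:ℝ), 0 ≤ g s)
    (hint : ∀ a b : ℝ, 0 < a → 0 < b → IntervalIntegrable (fun s => s * g' s) volume a b)
    (p₀ p : ℝ) (hp₀ : 0 < p₀) (hp : 0 < p) :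
    ∀ p₁ : ℝ, 0 < p₁ →
      p * (g p₀ - g p₁) + (∫ s in p₀..p₁, s * g' s)
        ≤ p * (g p₀ - g p) + ∫ s in p₀..p, s * g' s :=
  stmt3_general g g' hderiv hanti hint p₀ p hp₀ hp
end

section
/- Fix a real p ≥ 1 and ε > 0 with n = 1/ε^p an integer. Let w : [p_min, p_max] → ℝ≥0 be an integrable weight with total integral 1, and let t₁ < ... < t_{n+1} partition [p_min, p_max] so that ∫_{t_i}^{t_{i+1}} w = 1/n for each i. Then for every non-increasing f : [p_min, p_max] → [f_min, f_max] there exists a piecewise constant non-increasing function g with jumps only at the points t_i such that (∫_{p_min}^{p_max} w(s) |f(s) - g(s)|^p ds)^{1/p} ≤ ε·(f_max - f_min)/2. -/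
open MeasureTheory Set intervalIntegral

/-- **LOB upper bound.** Fix `p ≥ 1` and `ε > 0` with `n = 1/ε^p` an
integer. For a normalized integrable weight `w` on `[p_min,p_max]` and ticks
`t 1 < ⋯ < t (n+1)` splitting `[p_min,p_max]` into sub-intervals of equal `w`-measure
`1/n`, every non-increasing `f : [p_min,p_max] → [f_min,f_max]` admits a piecewise
constant non-increasing approximant `g` (with jumps only at the ticks) of weighted
`ℓ_p` error at most `ε (f_max - f_min)/2`. -/
theorem stmt7 (p ε pmin pmax fmin fmax : ℝ) (hp : 1 ≤ p) (hε : 0 < ε)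
    (n : ℕ) (hn : 1 ≤ n) (hnε : (n : ℝ) = 1 / ε ^ p)
    (hpp : pmin < pmax)
    (w : ℝ → ℝ) (hw0 : ∀ x ∈ Icc pmin pmax, 0 ≤ w x)
    (hwint : IntervalIntegrable w volume pmin pmax)
    (hwnorm : ∫ x in pmin..pmax, w x = 1)
    (t : ℕ → ℝ) (ht : StrictMonoOn t (Set.Icc 1 (n+1)))
    (ht1 : t 1 = pmin) (htn : t (n+1) = pmax)
    (hteq : ∀ i ∈ Set.Icc 1 n, ∫ x in (t i)..(t (i+1)), w x = 1 / (n : ℝ)) :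
    ∀ f : ℝ → ℝ, AntitoneOn f (Icc pmin pmax) →
      (∀ x ∈ Icc pmin pmax, f x ∈ Icc fmin fmax) →
      ∃ g : ℝ → ℝ, AntitoneOn g (Icc pmin pmax) ∧
        (∀ i ∈ Set.Icc 1 n, ∀ x ∈ Ioo (t i) (t (i+1)), ∀ y ∈ Ioo (t i) (t (i+1)),
          g x = g y) ∧
        (∫ s in pmin..pmax, w s * |f s - g s| ^ p) ^ (1/p)
          ≤ ε * (fmax - fmin) / 2 := by
  classical
  intro f hf hfb
  have hpmem : pmin ∈ Icc pmin pmax := ⟨le_refl _, le_of_lt hpp⟩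
  have hfm : fmin ≤ fmax := le_trans (hfb pmin hpmem).1 (hfb pmin hpmem).2
  have hεp : (0:ℝ) < ε ^ p := Real.rpow_pos_of_pos hε p
  have hnpos : (0:ℝ) < (n:ℝ) := by exact_mod_cast hn
  have hp0 : p ≠ 0 := by positivity
  have hC0 : (0:ℝ) ≤ fmax - fmin := by linarith
  set C : ℝ := fmax - fmin with hC
  -- ticks lie in [pmin, pmax]
  have htmono : MonotoneOn t (Set.Icc 1 (n+1)) := ht.monotoneOn
  have htmem : ∀ i, 1 ≤ i → i ≤ n + 1 → t i ∈ Icc pmin pmax := by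
    intro i h1 h2
    constructor
    · rw [← ht1]
      exact htmono ⟨le_refl 1, by omega⟩ ⟨h1, h2⟩ h1
    · rw [← htn]
      exact htmono ⟨h1, h2⟩ ⟨by omega, le_refl _⟩ h2
  have hfv : ∀ i, 1 ≤ i → i ≤ n + 1 → f (t i) ∈ Icc fmin fmax :=
    fun i h1 h2 => hfb _ (htmem i h1 h2)
  have hft : ∀ i j, 1 ≤ i → i ≤ j → j ≤ n + 1 → f (t j) ≤ f (t i) := by
    intro i j h1 h2 h3
    exact hf (htmem i h1 (by omega)) (htmem j (by omega) h3)
      (htmono ⟨h1, by omega⟩ ⟨by omega, h3⟩ h2)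
  -- the piecewise-constant values
  set c : ℕ → ℝ := fun i => (f (t i) + f (t (i+1))) / 2 with hc
  have hcmono : ∀ i j, 1 ≤ i → i ≤ j → j ≤ n → c j ≤ c i := by
    intro i j h1 h2 h3
    have h4 := hft i j h1 h2 (by omega)
    have h5 := hft (i+1) (j+1) (by omega) (by omega) (by omega)
    simp only [hc]; linarith
  have hcb : ∀ i, 1 ≤ i → i ≤ n → c i ∈ Icc fmin fmax := by
    intro i h1 h2
    have h3 := hfv i h1 (by omega)
    have h4 := hfv (i+1) (by omega) (by omega)
    exact ⟨by simp only [hc]; rcases h3 with ⟨a,_⟩; rcases h4 with ⟨b,_⟩; linarith,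
      by simp only [hc]; rcases h3 with ⟨_,a⟩; rcases h4 with ⟨_,b⟩; linarith⟩
  -- the approximant
  set S : ℝ → Finset ℕ := fun x => (Finset.Icc 1 n).filter (fun i => t i ≤ x) with hS
  set g : ℝ → ℝ := fun x => if h : (S x).Nonempty then c ((S x).max' h) else c 1 with hg
  have hmaxmem : ∀ x (h : (S x).Nonempty), (S x).max' h ∈ Finset.Icc 1 n :=
    fun x h => Finset.mem_filter.1 ((S x).max'_mem h) |>.1
  -- value of g on half-open tick intervals
  have hgval : ∀ j, 1 ≤ j → j ≤ n → ∀ x, t j ≤ x → x < t (j+1) → g x = c j := by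
    intro j h1 h2 x hx1 hx2
    have hjS : j ∈ S x := Finset.mem_filter.2 ⟨Finset.mem_Icc.2 ⟨h1, h2⟩, hx1⟩
    have hne : (S x).Nonempty := ⟨j, hjS⟩
    have hmax : (S x).max' hne = j := by
      apply le_antisymm
      · apply Finset.max'_le
        intro i hi
        rcases Finset.mem_filter.1 hi with ⟨hi1, hi2⟩
        rcases Finset.mem_Icc.1 hi1 with ⟨hia, hib⟩
        by_contra hcon
        push_neg at hcon
        have : t (j+1) ≤ t i :=
          htmono ⟨by omega, by omega⟩ ⟨by omega, by omega⟩ (by omega)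
        linarith
      · exact Finset.le_max' _ _ hjS
    simp only [hg, dif_pos hne, hmax]
  have hgant : Antitone g := by
    intro x y hxy
    by_cases hx : (S x).Nonempty
    · have hsub : S x ⊆ S y := by
        intro i hi
        rcases Finset.mem_filter.1 hi with ⟨hi1, hi2⟩
        exact Finset.mem_filter.2 ⟨hi1, le_trans hi2 hxy⟩
      have hy : (S y).Nonempty := hx.mono hsub
      have hle : (S x).max' hx ≤ (S y).max' hy := Finset.max'_subset hx hsub
      have hmx := Finset.mem_Icc.1 (hmaxmem x hx)
      have hmy := Finset.mem_Icc.1 (hmaxmem y hy)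
      simp only [hg, dif_pos hx, dif_pos hy]
      exact hcmono _ _ hmx.1 hle hmy.2
    · by_cases hy : (S y).Nonempty
      · have hmy := Finset.mem_Icc.1 (hmaxmem y hy)
        simp only [hg, dif_neg hx, dif_pos hy]
        exact hcmono 1 _ le_rfl hmy.1 hmy.2
      · simp [hg, dif_neg hx, dif_neg hy]
  have hgb : ∀ x, g x ∈ Icc fmin fmax := by
    intro x
    by_cases hx : (S x).Nonempty
    · have hmx := Finset.mem_Icc.1 (hmaxmem x hx)
      simp only [hg, dif_pos hx]
      exact hcb _ hmx.1 hmx.2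
    · simp only [hg, dif_neg hx]
      exact hcb 1 le_rfl hn
  -- globally antitone extension of f
  set F : ℝ → ℝ := fun x => f (max pmin (min x pmax)) with hF
  have hclamp : ∀ x : ℝ, max pmin (min x pmax) ∈ Icc pmin pmax := by
    intro x
    constructor
    · exact le_max_left _ _
    · exact max_le hpp.le (min_le_right _ _)
  have hFant : Antitone F := by
    intro x y hxy
    exact hf (hclamp x) (hclamp y)
      (max_le_max le_rfl (min_le_min (by exact hxy) le_rfl))
  have hFeq : ∀ x ∈ Icc pmin pmax, F x = f x := by
    intro x hx
    simp only [hF]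
    rw [min_eq_left hx.2, max_eq_right hx.1]
  have hFb : ∀ x, F x ∈ Icc fmin fmax := fun x => hfb _ (hclamp x)
  have hFmeas : Measurable F := hFant.measurable
  have hgmeas : Measurable g := hgant.measurable
  -- the error function
  set X : ℝ → ℝ := fun s => |F s - g s| ^ p with hX
  have hX0 : ∀ s, 0 ≤ X s := fun s => Real.rpow_nonneg (abs_nonneg _) p
  have hXC : ∀ s, X s ≤ C ^ p := by
    intro s
    have h1 := hFb s
    have h2 := hgb s
    have habs : |F s - g s| ≤ C := by
      rw [abs_sub_le_iff]
      constructor <;> [skip; skip] <;>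
        (simp only [hC]; rcases h1 with ⟨a1, a2⟩; rcases h2 with ⟨b1, b2⟩; linarith)
    exact Real.rpow_le_rpow (abs_nonneg _) habs (by linarith)
  have hXmeas : Measurable X := by
    simp only [hX]
    fun_prop
  -- integrability of the weighted error on subintervals
  have hInt : ∀ a b, a ∈ Icc pmin pmax → b ∈ Icc pmin pmax →
      IntervalIntegrable (fun s => w s * X s) volume a b := by
    intro a b ha hb
    have hw' : IntervalIntegrable w volume a b := by
      apply hwint.mono_set
      rw [Set.uIcc_of_le hpp.le]
      exact Set.uIcc_subset_Icc ha hb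
    have key : ∀ (u v : ℝ), IntegrableOn w (Ioc u v) volume →
        IntegrableOn (fun s => w s * X s) (Ioc u v) volume := by
      intro u v hwuv
      refine Integrable.mono' (g := fun s => C ^ p * ‖w s‖)
        (hwuv.norm.const_mul _)
        (hwuv.aestronglyMeasurable.mul hXmeas.aestronglyMeasurable)
        (Filter.Eventually.of_forall fun s => ?_)
      show ‖w s * X s‖ ≤ C ^ p * ‖w s‖
      have : ‖w s * X s‖ = ‖w s‖ * X s := by
        rw [norm_mul, Real.norm_of_nonneg (hX0 s)]
      rw [this, mul_comm (C ^ p) ‖w s‖]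
      exact mul_le_mul_of_nonneg_left (hXC s) (norm_nonneg _)
    exact ⟨key _ _ hw'.1, key _ _ hw'.2⟩
  -- per-interval estimate
  have hstep : ∀ j, 1 ≤ j → j ≤ n →
      ∫ s in (t j)..(t (j+1)), w s * X s ≤
        ((f (t j) - f (t (j+1))) / 2) ^ p * (1 / (n:ℝ)) := by
    intro j h1 h2
    have hjmem : t j ∈ Icc pmin pmax := htmem j h1 (by omega)
    have hj1mem : t (j+1) ∈ Icc pmin pmax := htmem (j+1) (by omega) (by omega)
    have hab : t j ≤ t (j+1) :=
      (ht ⟨h1, by omega⟩ ⟨by omega, by omega⟩ (by omega)).le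
    set K : ℝ := ((f (t j) - f (t (j+1))) / 2) ^ p with hK
    have hwj : IntervalIntegrable w volume (t j) (t (j+1)) := by
      apply hwint.mono_set
      rw [Set.uIcc_of_le hpp.le]
      exact Set.uIcc_subset_Icc hjmem hj1mem
    have hIa : IntervalIntegrable (fun s => w s * X s) volume (t j) (t (j+1)) :=
      hInt _ _ hjmem hj1mem
    have hIK : IntervalIntegrable (fun s => w s * K) volume (t j) (t (j+1)) :=
      hwj.mul_const K
    have hae : (fun s => w s * X s) ≤ᶠ[ae (volume.restrict (Icc (t j) (t (j+1))))]
        (fun s => w s * K) := by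
      have h1' : ∀ᵐ s ∂(volume.restrict (Icc (t j) (t (j+1)))), s ∈ Icc (t j) (t (j+1)) :=
        ae_restrict_mem measurableSet_Icc
      have h2' : ∀ᵐ s ∂(volume.restrict (Icc (t j) (t (j+1)))), s ≠ t (j+1) := by
        apply ae_restrict_of_ae
        rw [ae_iff]; simp
      filter_upwards [h1', h2'] with s hs hsb
      have hsI : s ∈ Icc pmin pmax := ⟨le_trans hjmem.1 hs.1, le_trans hs.2 hj1mem.2⟩
      have hgs : g s = c j := hgval j h1 h2 s hs.1 (lt_of_le_of_ne hs.2 hsb)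
      have hFs : F s = f s := hFeq s hsI
      have hfs1 : f s ≤ f (t j) := hf hjmem hsI hs.1
      have hfs2 : f (t (j+1)) ≤ f s := hf hsI hj1mem hs.2
      have habs : |F s - g s| ≤ (f (t j) - f (t (j+1))) / 2 := by
        rw [hFs, hgs, abs_sub_le_iff]
        constructor <;> (simp only [hc]; linarith)
      have hXs : X s ≤ K := by
        simp only [hX, hK]
        exact Real.rpow_le_rpow (abs_nonneg _) habs (by linarith)
      exact mul_le_mul_of_nonneg_left hXs (hw0 s hsI)
    calc ∫ s in (t j)..(t (j+1)), w s * X s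
        ≤ ∫ s in (t j)..(t (j+1)), w s * K :=
          intervalIntegral.integral_mono_ae_restrict hab hIa hIK hae
      _ = (∫ s in (t j)..(t (j+1)), w s) * K := intervalIntegral.integral_mul_const K w
      _ = K * (1 / (n:ℝ)) := by
          rw [hteq j ⟨h1, h2⟩]; ring
  -- split the integral over the ticks
  have hsplit : ∫ s in pmin..pmax, w s * X s =
      ∑ k ∈ Finset.range n, ∫ s in (t (k+1))..(t (k+2)), w s * X s := by
    rw [← ht1, ← htn]
    have := intervalIntegral.sum_integral_adjacent_intervals
      (f := fun s => w s * X s) (μ := volume) (a := fun k => t (k+1)) (n := n)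
      (fun k hk => hInt _ _ (htmem (k+1) (by omega) (by omega))
        (htmem (k+2) (by omega) (by omega)))
    rw [← this]
  -- sum of p-th powers is controlled by telescoping
  have hd : ∀ k, k < n → (0:ℝ) ≤ (f (t (k+1)) - f (t (k+2))) / 2 ∧
      (f (t (k+1)) - f (t (k+2))) / 2 ≤ C / 2 := by
    intro k hk
    have h1 := hft (k+1) (k+2) (by omega) (by omega) (by omega)
    have h2 := hfv (k+1) (by omega) (by omega)
    have h3 := hfv (k+2) (by omega) (by omega)
    constructor
    · linarith
    · simp only [hC]; rcases h2 with ⟨a,b⟩; rcases h3 with ⟨u,v⟩; linarith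
  have hsumbound : ∑ k ∈ Finset.range n, ((f (t (k+1)) - f (t (k+2))) / 2) ^ p
      ≤ (C / 2) ^ p := by
    have hterm : ∀ k ∈ Finset.range n,
        ((f (t (k+1)) - f (t (k+2))) / 2) ^ p
          ≤ (C/2) ^ (p-1) * ((f (t (k+1)) - f (t (k+2))) / 2) := by
      intro k hk
      have hk' := Finset.mem_range.1 hk
      obtain ⟨hd0, hdC⟩ := hd k hk'
      set d := (f (t (k+1)) - f (t (k+2))) / 2 with hdd
      have : d ^ p = d ^ (p-1) * d := by
        have := Real.rpow_add' (x := d) (y := p - 1) (z := 1) hd0 (by simpa using hp0)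
        simpa [Real.rpow_one] using this
      rw [this]
      exact mul_le_mul_of_nonneg_right
        (Real.rpow_le_rpow hd0 hdC (by linarith)) hd0
    calc ∑ k ∈ Finset.range n, ((f (t (k+1)) - f (t (k+2))) / 2) ^ p
        ≤ ∑ k ∈ Finset.range n, (C/2) ^ (p-1) * ((f (t (k+1)) - f (t (k+2))) / 2) :=
          Finset.sum_le_sum hterm
      _ = (C/2) ^ (p-1) * ((f (t 1) - f (t (n+1))) / 2) := by
          rw [← Finset.mul_sum]
          congr 1
          have : ∑ k ∈ Finset.range n, ((f (t (k+1)) - f (t (k+2))) / 2)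
              = (∑ k ∈ Finset.range n, (f (t (k+1)) - f (t (k+2)))) / 2 := by
            rw [Finset.sum_div]
          rw [this, Finset.sum_range_sub' (fun k => f (t (k+1))) n]
      _ ≤ (C/2) ^ (p-1) * (C / 2) := by
          apply mul_le_mul_of_nonneg_left _ (Real.rpow_nonneg (by linarith) _)
          have h2 := hfv 1 le_rfl (by omega)
          have h3 := hfv (n+1) (by omega) le_rfl
          simp only [hC]; rcases h2 with ⟨a,b⟩; rcases h3 with ⟨u,v⟩; linarith
      _ = (C/2) ^ p := by
          have := Real.rpow_add' (x := C/2) (y := p - 1) (z := 1)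
            (by linarith) (by simpa using hp0)
          simp only [Real.rpow_one] at this
          rw [← this]
          norm_num
  -- total integral bound
  have htotal : ∫ s in pmin..pmax, w s * X s ≤ (ε * C / 2) ^ p := by
    have h1' : ∫ s in pmin..pmax, w s * X s
        ≤ ∑ k ∈ Finset.range n, ((f (t (k+1)) - f (t (k+2))) / 2) ^ p * (1 / (n:ℝ)) := by
      rw [hsplit]
      refine Finset.sum_le_sum fun k hk => ?_
      have hk' := Finset.mem_range.1 hk
      exact hstep (k+1) (by omega) (by omega)
    have h2' : ∑ k ∈ Finset.range n, ((f (t (k+1)) - f (t (k+2))) / 2) ^ p * (1 / (n:ℝ))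
        = (∑ k ∈ Finset.range n, ((f (t (k+1)) - f (t (k+2))) / 2) ^ p) * (1 / (n:ℝ)) := by
      rw [Finset.sum_mul]
    have h3' : (1:ℝ) / (n:ℝ) = ε ^ p := by
      rw [hnε]; field_simp
    have h4' : (∑ k ∈ Finset.range n, ((f (t (k+1)) - f (t (k+2))) / 2) ^ p) * (1 / (n:ℝ))
        ≤ (C/2) ^ p * ε ^ p := by
      rw [h3']
      exact mul_le_mul_of_nonneg_right hsumbound hεp.le
    have h5' : (C/2) ^ p * ε ^ p = (ε * C / 2) ^ p := by
      rw [← Real.mul_rpow (by linarith) hε.le]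
      congr 1
      ring
    calc ∫ s in pmin..pmax, w s * X s
        ≤ _ := h1'
      _ = _ := h2'
      _ ≤ (C/2) ^ p * ε ^ p := h4'
      _ = (ε * C / 2) ^ p := h5'
  -- conclude
  refine ⟨g, hgant.antitoneOn _, ?_, ?_⟩
  · intro i hi x hx y hy
    rcases hi with ⟨hi1, hi2⟩
    rw [hgval i hi1 hi2 x hx.1.le hx.2, hgval i hi1 hi2 y hy.1.le hy.2]
  · have hcongr : ∫ s in pmin..pmax, w s * |f s - g s| ^ p
        = ∫ s in pmin..pmax, w s * X s := by
      apply intervalIntegral.integral_congr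
      intro s hs
      rw [Set.uIcc_of_le hpp.le] at hs
      simp only [hX]
      rw [hFeq s hs]
    rw [hcongr]
    have hnn : 0 ≤ ∫ s in pmin..pmax, w s * X s :=
      intervalIntegral.integral_nonneg hpp.le
        (fun x hx => mul_nonneg (hw0 x hx) (hX0 x))
    calc (∫ s in pmin..pmax, w s * X s) ^ (1/p)
        ≤ ((ε * C / 2) ^ p) ^ (1/p) :=
          Real.rpow_le_rpow hnn htotal (by positivity)
      _ = ε * C / 2 := by
          rw [one_div, Real.rpow_rpow_inv (by positivity) hp0]
      _ = ε * (fmax - fmin) / 2 := by rw [hC]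
end

section
/- Let t₃ ≤ t₅ ≤ ... ≤ t_{2n+3} be points and let g₁, ..., g_{n-1} : [a,b] → ℝ be non-increasing functions. Then there exists l ∈ {1,...,n} such that for every i, g_i(t_{2l+1}) - g_i(t_{2l+3}) ≤ (g_i(t₃) - g_i(t_{2n+3}))/2. Consequently, every finite non-negative linear combination g = Σ c_i g_i also satisfies g(t_{2l+1}) - g(t_{2l+3}) ≤ (g(t₃) - g(t_{2n+3}))/2 for that same l. -/
open Set Finset

/-- **pigeonhole: a good interval for all basis functions.**
Given points `t₃ ≤ t₅ ≤ ⋯ ≤ t_{2n+3}` and `n-1` non-increasing functions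
`g₁,…,g_{n-1}` on `[a,b]`, some `l ∈ {1,…,n}` satisfies
`gᵢ(t_{2l+1}) - gᵢ(t_{2l+3}) ≤ (gᵢ(t₃) - gᵢ(t_{2n+3}))/2` for every `i`;
consequently every non-negative linear combination `g = Σ cᵢ gᵢ` satisfies the same
inequality for that `l`. -/
theorem stmt9 (a b : ℝ) (n : ℕ) (hn : 1 ≤ n) (t : ℕ → ℝ)
    (hmono : ∀ i ∈ Set.Icc 3 (2*n+3), ∀ j ∈ Set.Icc 3 (2*n+3), i ≤ j → t i ≤ t j)
    (hmem : ∀ i ∈ Set.Icc 3 (2*n+3), t i ∈ Icc a b)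
    (g : Fin (n-1) → ℝ → ℝ)
    (hanti : ∀ i, AntitoneOn (g i) (Icc a b)) :
    ∃ l ∈ Set.Icc 1 n,
      (∀ i, g i (t (2*l+1)) - g i (t (2*l+3))
              ≤ (g i (t 3) - g i (t (2*n+3))) / 2) ∧
      (∀ c : Fin (n-1) → ℝ, (∀ i, 0 ≤ c i) →
        (∑ i, c i * g i (t (2*l+1))) - (∑ i, c i * g i (t (2*l+3)))
          ≤ ((∑ i, c i * g i (t 3)) - (∑ i, c i * g i (t (2*n+3)))) / 2) := by

  have key : ∀ i : Fin (n-1), ∀ p q, 3 ≤ p → p ≤ q → q ≤ 2*n+3 → g i (t q) ≤ g i (t p) := by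
    intro i p q hp hpq hq
    exact hanti i (hmem p ⟨hp, hpq.trans hq⟩) (hmem q ⟨hp.trans hpq, hq⟩)
      (hmono p ⟨hp, hpq.trans hq⟩ q ⟨hp.trans hpq, hq⟩ hpq)
  set D : Fin (n-1) → ℝ := fun i => g i (t 3) - g i (t (2*n+3)) with hD
  set B : Fin (n-1) → Finset ℕ := fun i =>
    (Finset.Icc 1 n).filter (fun l => D i / 2 < g i (t (2*l+1)) - g i (t (2*l+3))) with hB
  have hmain : ∀ i : Fin (n-1), ∀ l1 l2, l1 ∈ B i → l2 ∈ B i → l1 < l2 → False := by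
    intro i l1 l2 h1 h2 hlt
    simp only [hB, Finset.mem_filter, Finset.mem_Icc] at h1 h2
    obtain ⟨⟨hl1a, hl1b⟩, hbad1⟩ := h1
    obtain ⟨⟨hl2a, hl2b⟩, hbad2⟩ := h2
    have e1 : g i (t (2*l1+1)) ≤ g i (t 3) := key i 3 (2*l1+1) le_rfl (by omega) (by omega)
    have e2 : g i (t (2*l2+1)) ≤ g i (t (2*l1+3)) :=
      key i (2*l1+3) (2*l2+1) (by omega) (by omega) (by omega)
    have e3 : g i (t (2*n+3)) ≤ g i (t (2*l2+3)) :=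
      key i (2*l2+3) (2*n+3) (by omega) (by omega) (by omega)
    have hDd : D i = g i (t 3) - g i (t (2*n+3)) := rfl
    linarith
  have hcard : ∀ i, (B i).card ≤ 1 := by
    intro i
    rw [Finset.card_le_one]
    intro l1 h1 l2 h2
    by_contra hne
    rcases lt_or_gt_of_ne hne with h | h
    · exact hmain i l1 l2 h1 h2 h
    · exact hmain i l2 l1 h2 h1 h
  have hun : (Finset.univ.biUnion B).card ≤ n - 1 := by
    calc (Finset.univ.biUnion B).card ≤ ∑ i : Fin (n-1), (B i).card := Finset.card_biUnion_le
    _ ≤ ∑ _i : Fin (n-1), 1 := Finset.sum_le_sum (fun i _ => hcard i)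
    _ = n - 1 := by simp
  have hex : ∃ l ∈ Finset.Icc 1 n, l ∉ Finset.univ.biUnion B := by
    by_contra h
    push_neg at h
    have hsub : Finset.Icc 1 n ⊆ Finset.univ.biUnion B := h
    have := Finset.card_le_card hsub
    rw [Nat.card_Icc] at this
    omega
  obtain ⟨l, hl, hgood⟩ := hex
  simp only [Finset.mem_biUnion, Finset.mem_univ, true_and, not_exists] at hgood
  rw [Finset.mem_Icc] at hl
  have hgood' : ∀ i, g i (t (2*l+1)) - g i (t (2*l+3)) ≤ D i / 2 := by
    intro i
    have h := hgood i
    simp only [hB, Finset.mem_filter, Finset.mem_Icc, hl.1, hl.2, true_and, not_lt] at h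
    exact h
  refine ⟨l, ⟨hl.1, hl.2⟩, fun i => hgood' i, ?_⟩
  intro c hc
  rw [← Finset.sum_sub_distrib, ← Finset.sum_sub_distrib, Finset.sum_div]
  refine Finset.sum_le_sum (fun i _ => ?_)
  have h1 := hgood' i
  have hDd : D i = g i (t 3) - g i (t (2*n+3)) := rfl
  nlinarith [mul_le_mul_of_nonneg_left h1 (hc i)]
end

section
/- Fix p ≥ 1 and ε > 0 with n = 1/ε^p an integer. Let w be a normalized weight on [p_min, p_max] and let the interval be partitioned into 2(n+2) sub-intervals of equal w-measure 1/(2(n+2)). Then for every set of n-1 non-increasing basis functions g₁,...,g_{n-1} : [p_min, p_max] → ℝ≥0, there exists a non-increasing step function f_a taking only values f_max and f_min such that for every g in the conical hull of {g₁,...,g_{n-1}}, (∫ w(s)|f_a(s) - g(s)|^p ds)^{1/p} ≥ c·ε·(f_max - f_min) for some universal constant c > 0 (depending only on p). -/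
open MeasureTheory Set intervalIntegral Finset

private lemma stmt11_aux (p : ℝ) (hp : 1 ≤ p)
    (ε pmin pmax fmin fmax : ℝ) (n : ℕ)
    (hε : 0 < ε) (hn : (n : ℝ) = 1 / ε ^ p) (hn1 : 1 ≤ n)
    (hpm : pmin < pmax) (hf : fmin < fmax)
    (w : ℝ → ℝ) (hw0 : ∀ x ∈ Icc pmin pmax, 0 ≤ w x)
    (hIw : IntervalIntegrable w volume pmin pmax)
    (t : ℕ → ℝ)
    (tmono : ∀ i k : ℕ, 1 ≤ i → i ≤ k → k ≤ 2*(n+2)+1 → t i ≤ t k)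
    (tmem : ∀ i : ℕ, 1 ≤ i → i ≤ 2*(n+2)+1 → t i ∈ Icc pmin pmax)
    (hmeas : ∀ i ∈ Set.Icc 1 (2*(n+2)),
      ∫ x in (t i)..(t (i+1)), w x = 1 / (2*((n : ℝ)+2)))
    (j : ℕ) (hj2 : 2 ≤ j) (hjn : j ≤ n + 1)
    (fa : ℝ → ℝ) (hfa : ∀ x, fa x = if x ≤ t (2*j) then fmax else fmin)
    (G : ℝ → ℝ) (hGanti : AntitoneOn G (Icc pmin pmax))
    (hG0 : ∀ x ∈ Icc pmin pmax, 0 ≤ G x)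
    (hdrop : G (t (2*j-1)) - G (t (2*j+1)) ≤
      2/3 * (G (t 2) - G (t (2*(n+2))))) :
    1/108 * ε * (fmax - fmin)
      ≤ (∫ s in pmin..pmax, w s * |fa s - G s| ^ p) ^ (1/p) := by
  have hp0 : (0:ℝ) < p := by linarith
  have hpp : pmin ≤ pmax := hpm.le
  set B : ℝ := (fmax - fmin)/18 with hBdef
  have hB : 0 < B := by rw [hBdef]; linarith
  -- measurability / integrability of the integrand
  have hmeasG : AEMeasurable G (volume.restrict (Set.Ioc pmin pmax)) :=
    aemeasurable_restrict_of_antitoneOn measurableSet_Ioc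
      (hGanti.mono Set.Ioc_subset_Icc_self)
  have hfam : Measurable fa := by
    have : fa = fun x => if x ≤ t (2*j) then fmax else fmin := funext hfa
    rw [this]
    exact Measurable.ite (measurableSet_le measurable_id measurable_const)
      measurable_const measurable_const
  have hh : AEMeasurable (fun s => |fa s - G s| ^ p)
      (volume.restrict (Set.Ioc pmin pmax)) := by
    have hφ : Measurable fun y : ℝ => |y| ^ p :=
      ((Real.continuous_rpow_const (by linarith)).comp continuous_abs).measurable
    exact hφ.comp_aemeasurable (hfam.aemeasurable.sub hmeasG)
  have hpminIcc : pmin ∈ Icc pmin pmax := left_mem_Icc.2 hpp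
  set C : ℝ := |fmax| + |fmin| + G pmin + 1 with hCdef
  have hC0 : 0 ≤ C := by
    have := hG0 pmin hpminIcc
    have h1 := abs_nonneg fmax
    have h2 := abs_nonneg fmin
    rw [hCdef]; linarith
  have hbd : ∀ x ∈ Set.Icc pmin pmax, |fa x - G x| ≤ C := by
    intro x hx
    have h1 : |fa x| ≤ |fmax| + |fmin| := by
      rw [hfa]
      split_ifs
      · have := abs_nonneg fmin; linarith
      · have := abs_nonneg fmax; linarith
    have h2 : |G x| ≤ G pmin := by
      rw [abs_of_nonneg (hG0 x hx)]
      exact hGanti hpminIcc hx hx.1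
    calc |fa x - G x| ≤ |fa x| + |G x| := abs_sub _ _
      _ ≤ C := by rw [hCdef]; linarith
  have hIwh' : IntervalIntegrable (fun s => w s * |fa s - G s| ^ p)
      volume pmin pmax := by
    rw [intervalIntegrable_iff_integrableOn_Ioc_of_le hpp]
    have hwInt : IntegrableOn w (Set.Ioc pmin pmax) volume := hIw.1
    have hb : ∀ᵐ x ∂(volume.restrict (Set.Ioc pmin pmax)),
        ‖|fa x - G x| ^ p‖ ≤ C ^ p := by
      refine (ae_restrict_iff' measurableSet_Ioc).2 (ae_of_all _ fun x hx => ?_)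
      have h0 : 0 ≤ |fa x - G x| ^ p := Real.rpow_nonneg (abs_nonneg _) _
      rw [Real.norm_eq_abs, abs_of_nonneg h0]
      exact Real.rpow_le_rpow (abs_nonneg _) (hbd x (Set.Ioc_subset_Icc_self hx)) hp0.le
    have := Integrable.bdd_mul (c := C ^ p) hwInt hh.aestronglyMeasurable hb
    exact this.congr (ae_of_all _ fun x => mul_comm _ _)
  have hnonneg : ∀ x ∈ Set.Icc pmin pmax, 0 ≤ w x * |fa x - G x| ^ p :=
    fun x hx => mul_nonneg (hw0 x hx) (Real.rpow_nonneg (abs_nonneg _) _)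
  -- main step: a single small interval with pointwise error ≥ B suffices
  have key : ∀ a : ℕ, 1 ≤ a → a ≤ 2*(n+2) →
      (∀ x ∈ Set.Ioc (t a) (t (a+1)), B ≤ |fa x - G x|) →
      1/108 * ε * (fmax - fmin)
        ≤ (∫ s in pmin..pmax, w s * |fa s - G s| ^ p) ^ (1/p) := by
    intro a ha1 ha2 hpt
    have hta : t a ∈ Set.Icc pmin pmax := tmem a ha1 (by omega)
    have hta1 : t (a+1) ∈ Set.Icc pmin pmax := tmem (a+1) (by omega) (by omega)
    have htale : t a ≤ t (a+1) := tmono a (a+1) ha1 (by omega) (by omega)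
    have hsubI : Set.uIcc (t a) (t (a+1)) ⊆ Set.uIcc pmin pmax := by
      rw [Set.uIcc_of_le htale, Set.uIcc_of_le hpp]
      exact Set.Icc_subset_Icc hta.1 hta1.2
    have hIsub : IntervalIntegrable (fun s => w s * |fa s - G s| ^ p)
        volume (t a) (t (a+1)) := hIwh'.mono_set hsubI
    have hIwsub : IntervalIntegrable (fun s => B ^ p * w s)
        volume (t a) (t (a+1)) := (hIw.mono_set hsubI).const_mul _
    have hBp : 0 < B ^ p := Real.rpow_pos_of_pos hB p
    have hden : (0:ℝ) < 1/(2*((n:ℝ)+2)) := by positivity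
    have hlow : B ^ p * (1/(2*((n:ℝ)+2)))
        ≤ ∫ s in (t a)..(t (a+1)), w s * |fa s - G s| ^ p := by
      have h1 : ∫ s in (t a)..(t (a+1)), B ^ p * w s
          = B ^ p * (1/(2*((n:ℝ)+2))) := by
        rw [intervalIntegral.integral_const_mul, hmeas a (Set.mem_Icc.2 ⟨ha1, ha2⟩)]
      rw [← h1]
      refine intervalIntegral.integral_mono_ae_restrict htale hIwsub hIsub ?_
      have hIcc : volume.restrict (Set.Icc (t a) (t (a+1)))
          = volume.restrict (Set.Ioc (t a) (t (a+1))) :=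
        Measure.restrict_congr_set Ioc_ae_eq_Icc.symm
      rw [hIcc]
      refine (ae_restrict_iff' measurableSet_Ioc).2 (ae_of_all _ fun x hx => ?_)
      have hxI : x ∈ Set.Icc pmin pmax := ⟨hta.1.trans hx.1.le, hx.2.trans hta1.2⟩
      have h2 : B ^ p ≤ |fa x - G x| ^ p :=
        Real.rpow_le_rpow hB.le (hpt x hx) hp0.le
      calc B ^ p * w x = w x * B ^ p := mul_comm _ _
        _ ≤ w x * |fa x - G x| ^ p :=
          mul_le_mul_of_nonneg_left h2 (hw0 x hxI)
    have htotal : B ^ p * (1/(2*((n:ℝ)+2)))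
        ≤ ∫ s in pmin..pmax, w s * |fa s - G s| ^ p := by
      refine hlow.trans
        (intervalIntegral.integral_mono_interval hta.1 htale hta1.2 ?_ hIwh')
      exact (ae_restrict_iff' measurableSet_Ioc).2
        (ae_of_all _ fun x hx => hnonneg x (Set.Ioc_subset_Icc_self hx))
    have h5 : (B ^ p * (1/(2*((n:ℝ)+2)))) ^ (1/p)
        ≤ (∫ s in pmin..pmax, w s * |fa s - G s| ^ p) ^ (1/p) :=
      Real.rpow_le_rpow (mul_pos hBp hden).le htotal (by positivity)
    have h6 : (B ^ p * (1/(2*((n:ℝ)+2)))) ^ (1/p)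
        = B * (1/(2*((n:ℝ)+2))) ^ (1/p) := by
      rw [Real.mul_rpow (Real.rpow_nonneg hB.le p) hden.le]
      congr 1
      rw [← Real.rpow_mul hB.le, mul_one_div_cancel hp0.ne', Real.rpow_one]
    have hnpos : (0:ℝ) < (n:ℝ) := by exact_mod_cast Nat.lt_of_lt_of_le Nat.zero_lt_one hn1
    have hεp : ε ^ p = 1 / (n:ℝ) := by
      have hε0 : (0:ℝ) < ε ^ p := Real.rpow_pos_of_pos hε p
      field_simp at hn ⊢
      linarith [hn]
    have h7 : ε ^ p / 6 ≤ 1/(2*((n:ℝ)+2)) := by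
      rw [hεp, div_div]
      apply one_div_le_one_div_of_le
      · positivity
      · have : (1:ℝ) ≤ (n:ℝ) := by exact_mod_cast hn1
        linarith
    have h8 : ε/6 ≤ (1/(2*((n:ℝ)+2))) ^ (1/p) := by
      have h81 : (ε ^ p / 6) ^ (1/p) ≤ (1/(2*((n:ℝ)+2))) ^ (1/p) :=
        Real.rpow_le_rpow (by positivity) h7 (by positivity)
      refine le_trans ?_ h81
      have he1 : ε ^ p / 6 = ε ^ p * (1/6) := by ring
      have he2 : (ε ^ p * (1/6 : ℝ)) ^ (1/p)
          = ε * ((1/6 : ℝ)) ^ (1/p) := by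
        rw [Real.mul_rpow (Real.rpow_nonneg hε.le p) (by norm_num)]
        congr 1
        rw [← Real.rpow_mul hε.le, mul_one_div_cancel hp0.ne', Real.rpow_one]
      rw [he1, he2]
      have hle1 : (1/p : ℝ) ≤ 1 := by
        rw [div_le_one hp0]; exact hp
      have h61 : ((1:ℝ)/6) ^ (1:ℝ) ≤ ((1:ℝ)/6) ^ (1/p) :=
        Real.rpow_le_rpow_of_exponent_ge (by norm_num) (by norm_num) hle1
      rw [Real.rpow_one] at h61
      calc ε/6 = ε * (1/6) := by ring
        _ ≤ ε * ((1/6:ℝ)) ^ (1/p) := mul_le_mul_of_nonneg_left h61 hε.le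
    calc 1/108 * ε * (fmax - fmin) = B * (ε/6) := by rw [hBdef]; ring
      _ ≤ B * (1/(2*((n:ℝ)+2))) ^ (1/p) := mul_le_mul_of_nonneg_left h8 hB.le
      _ = (B ^ p * (1/(2*((n:ℝ)+2)))) ^ (1/p) := h6.symm
      _ ≤ _ := h5
  -- index arithmetic facts
  have hT2j : t 2 ≤ t (2*j) := tmono 2 (2*j) (by omega) (by omega) (by omega)
  -- case analysis
  by_cases hT1 : fmax + B < G (t 2)
  · refine key 1 le_rfl (by omega) fun x hx => ?_
    have hxI : x ∈ Icc pmin pmax := by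
      have h1 := tmem 1 le_rfl (by omega)
      have h2 := tmem 2 (by omega) (by omega)
      exact ⟨h1.1.trans hx.1.le, hx.2.trans h2.2⟩
    have hfax : fa x = fmax := by
      rw [hfa]; exact if_pos (hx.2.trans hT2j)
    have hGx : G (t 2) ≤ G x :=
      hGanti hxI (tmem 2 (by omega) (by omega)) hx.2
    rw [hfax, abs_sub_comm]
    calc B ≤ G x - fmax := by linarith
      _ ≤ |G x - fmax| := le_abs_self _
  by_cases hT2 : G (t (2*j-1)) < fmax - B
  · refine key (2*j-1) (by omega) (by omega) fun x hx => ?_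
    have hidx : 2*j-1+1 = 2*j := by omega
    rw [hidx] at hx
    have hxI : x ∈ Icc pmin pmax := by
      have h1 := tmem (2*j-1) (by omega) (by omega)
      have h2 := tmem (2*j) (by omega) (by omega)
      exact ⟨h1.1.trans hx.1.le, hx.2.trans h2.2⟩
    have hfax : fa x = fmax := by rw [hfa]; exact if_pos hx.2
    have hGx : G x ≤ G (t (2*j-1)) :=
      hGanti (tmem (2*j-1) (by omega) (by omega)) hxI hx.1.le
    rw [hfax]
    calc B ≤ fmax - G x := by linarith
      _ ≤ |fmax - G x| := le_abs_self _
  by_cases hT3 : fmin + B < G (t (2*j+1))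
  · refine key (2*j) (by omega) (by omega) fun x hx => ?_
    have hxI : x ∈ Icc pmin pmax := by
      have h1 := tmem (2*j) (by omega) (by omega)
      have h2 := tmem (2*j+1) (by omega) (by omega)
      exact ⟨h1.1.trans hx.1.le, hx.2.trans h2.2⟩
    have hfax : fa x = fmin := by rw [hfa]; exact if_neg (not_le.2 hx.1)
    have hGx : G (t (2*j+1)) ≤ G x :=
      hGanti hxI (tmem (2*j+1) (by omega) (by omega)) hx.2
    rw [hfax, abs_sub_comm]
    calc B ≤ G x - fmin := by linarith
      _ ≤ |G x - fmin| := le_abs_self _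
  by_cases hT4 : G (t (2*(n+2))) < fmin - B
  · refine key (2*(n+2)) (by omega) (by omega) fun x hx => ?_
    have hxI : x ∈ Icc pmin pmax := by
      have h1 := tmem (2*(n+2)) (by omega) (by omega)
      have h2 := tmem (2*(n+2)+1) (by omega) (by omega)
      exact ⟨h1.1.trans hx.1.le, hx.2.trans h2.2⟩
    have hfax : fa x = fmin := by
      rw [hfa]
      refine if_neg (not_le.2 ?_)
      have : t (2*j) ≤ t (2*(n+2)) :=
        tmono (2*j) (2*(n+2)) (by omega) (by omega) (by omega)
      exact lt_of_le_of_lt this hx.1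
    have hGx : G x ≤ G (t (2*(n+2))) :=
      hGanti (tmem (2*(n+2)) (by omega) (by omega)) hxI hx.1.le
    rw [hfax]
    calc B ≤ fmin - G x := by linarith
      _ ≤ |fmin - G x| := le_abs_self _
  · -- all tests pass: contradiction with the small-drop property
    exfalso
    push_neg at hT1 hT2 hT3 hT4
    have hm1 : G (t (2*j-1)) ≤ G (t 2) :=
      hGanti (tmem 2 (by omega) (by omega)) (tmem (2*j-1) (by omega) (by omega))
        (tmono 2 (2*j-1) (by omega) (by omega) (by omega))
    have hm2 : G (t (2*(n+2))) ≤ G (t (2*j+1)) :=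
      hGanti (tmem (2*j+1) (by omega) (by omega))
        (tmem (2*(n+2)) (by omega) (by omega))
        (tmono (2*j+1) (2*(n+2)) (by omega) (by omega) (by omega))
    have hBval : B = (fmax - fmin)/18 := hBdef
    linarith

/-- **lower bound.** Fix `p ≥ 1`. There is a constant `c > 0`
(depending only on `p`) such that: for every `ε > 0` with `n = 1/ε^p` an integer,
every normalized weight `w` on `[p_min, p_max]` split by ticks
`t 1 < ⋯ < t (2(n+2)+1)` into `2(n+2)` sub-intervals of equal `w`-measure
`1/(2(n+2))`, and every family of `n-1` non-increasing non-negative basis functions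
`g₁,…,g_{n-1}`, there is a non-increasing step function `f_a` taking only the values
`f_max` and `f_min` such that every non-negative linear combination of the basis
functions has weighted `ℓ_p` distance at least `c ε (f_max - f_min)` from `f_a`. -/
theorem stmt11 (p : ℝ) (hp : 1 ≤ p) :
    ∃ c : ℝ, 0 < c ∧
      ∀ (ε pmin pmax fmin fmax : ℝ) (n : ℕ),
        0 < ε → (n : ℝ) = 1 / ε ^ p → 1 ≤ n → pmin < pmax → fmin < fmax →
        ∀ (w : ℝ → ℝ), (∀ x ∈ Icc pmin pmax, 0 ≤ w x) →
          IntervalIntegrable w volume pmin pmax →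
          (∫ x in pmin..pmax, w x) = 1 →
        ∀ (t : ℕ → ℝ), StrictMonoOn t (Set.Icc 1 (2*(n+2)+1)) →
          t 1 = pmin → t (2*(n+2)+1) = pmax →
          (∀ i ∈ Set.Icc 1 (2*(n+2)),
            ∫ x in (t i)..(t (i+1)), w x = 1 / (2*((n : ℝ)+2))) →
        ∀ (g : Fin (n-1) → ℝ → ℝ),
          (∀ i, AntitoneOn (g i) (Icc pmin pmax)) →
          (∀ i, ∀ x ∈ Icc pmin pmax, 0 ≤ g i x) →
        ∃ fa : ℝ → ℝ, AntitoneOn fa (Icc pmin pmax) ∧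
          (∀ x ∈ Icc pmin pmax, fa x = fmax ∨ fa x = fmin) ∧
          ∀ coef : Fin (n-1) → ℝ, (∀ i, 0 ≤ coef i) →
            c * ε * (fmax - fmin) ≤
              (∫ s in pmin..pmax,
                w s * |fa s - ∑ i, coef i * g i s| ^ p) ^ (1/p) := by
  refine ⟨1/108, by norm_num, ?_⟩
  intro ε pmin pmax fmin fmax n hε hn hn1 hpm hf w hw0 hIw hw1 t ht htl htr hmeas g hga hg0
  have hpp : pmin ≤ pmax := hpm.le
  -- ticks are monotone and stay in the interval
  have tmono : ∀ i k : ℕ, 1 ≤ i → i ≤ k → k ≤ 2*(n+2)+1 → t i ≤ t k := by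
    intro i k h1 h2 h3
    rcases eq_or_lt_of_le h2 with rfl | hlt
    · exact le_refl _
    · exact le_of_lt (ht ⟨h1, by omega⟩ ⟨by omega, h3⟩ hlt)
  have tmem : ∀ i : ℕ, 1 ≤ i → i ≤ 2*(n+2)+1 → t i ∈ Icc pmin pmax := by
    intro i h1 h2
    constructor
    · rw [← htl]; exact tmono 1 i le_rfl h1 h2
    · rw [← htr]; exact tmono i (2*(n+2)+1) h1 h2 le_rfl
  -- find a "good" interval where each basis function has small decrease
  have hgood : ∃ j, 2 ≤ j ∧ j ≤ n+1 ∧ ∀ i : Fin (n-1),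
      g i (t (2*j-1)) - g i (t (2*j+1)) ≤
        2/3 * (g i (t 2) - g i (t (2*(n+2)))) := by
    by_contra hbad
    push_neg at hbad
    have hch : ∀ j ∈ Finset.Icc 2 (n+1), ∃ k : ℕ, ∃ hk : k < n-1,
        2/3 * (g ⟨k, hk⟩ (t 2) - g ⟨k, hk⟩ (t (2*(n+2)))) <
          g ⟨k, hk⟩ (t (2*j-1)) - g ⟨k, hk⟩ (t (2*j+1)) := by
      intro j hj
      simp only [Finset.mem_Icc] at hj
      obtain ⟨i, hi⟩ := hbad j hj.1 hj.2
      exact ⟨i.1, i.2, by simpa using hi⟩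
    set F : ℕ → ℕ := fun j =>
      if h : j ∈ Finset.Icc 2 (n+1) then (hch j h).choose else 0 with hF
    have hmaps : ∀ j ∈ Finset.Icc 2 (n+1), F j ∈ Finset.range (n-1) := by
      intro j hj
      obtain ⟨hk, _⟩ := (hch j hj).choose_spec
      simp only [hF, dif_pos hj, Finset.mem_range]
      exact hk
    have hcard : (Finset.range (n-1)).card < (Finset.Icc 2 (n+1)).card := by
      rw [Finset.card_range, Nat.card_Icc]
      omega
    obtain ⟨j1, hj1, j2, hj2, hne, heq⟩ :=
      Finset.exists_ne_map_eq_of_card_lt_of_maps_to hcard hmaps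
    have main : ∀ a b : ℕ, a ∈ Finset.Icc 2 (n+1) → b ∈ Finset.Icc 2 (n+1) →
        a < b → F a = F b → False := by
      intro a b ha hb hab hFeq
      obtain ⟨hka, hPa⟩ := (hch a ha).choose_spec
      obtain ⟨hkb, hPb⟩ := (hch b hb).choose_spec
      have hFa : F a = (hch a ha).choose := by simp only [hF]; exact dif_pos ha
      have hFb : F b = (hch b hb).choose := by simp only [hF]; exact dif_pos hb
      have hkeq : (hch a ha).choose = (hch b hb).choose := by
        rw [← hFa, ← hFb, hFeq]
      set i : Fin (n-1) := ⟨(hch a ha).choose, hka⟩ with hi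
      have hPb' : 2/3 * (g i (t 2) - g i (t (2*(n+2)))) <
          g i (t (2*b-1)) - g i (t (2*b+1)) := by
        have : i = (⟨(hch b hb).choose, hkb⟩ : Fin (n-1)) := by
          rw [hi]; exact Fin.ext hkeq
        rw [this]; exact hPb
      simp only [Finset.mem_Icc] at ha hb
      -- antitone chain inequalities
      have a1 : g i (t (2*a-1)) ≤ g i (t 2) :=
        hga i (tmem 2 (by omega) (by omega)) (tmem (2*a-1) (by omega) (by omega))
          (tmono 2 (2*a-1) (by omega) (by omega) (by omega))
      have a2 : g i (t (2*b-1)) ≤ g i (t (2*a+1)) :=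
        hga i (tmem (2*a+1) (by omega) (by omega))
          (tmem (2*b-1) (by omega) (by omega))
          (tmono (2*a+1) (2*b-1) (by omega) (by omega) (by omega))
      have a3 : g i (t (2*(n+2))) ≤ g i (t (2*b+1)) :=
        hga i (tmem (2*b+1) (by omega) (by omega))
          (tmem (2*(n+2)) (by omega) (by omega))
          (tmono (2*b+1) (2*(n+2)) (by omega) (by omega) (by omega))
      have a4 : g i (t (2*a+1)) ≤ g i (t (2*a-1)) :=
        hga i (tmem (2*a-1) (by omega) (by omega))
          (tmem (2*a+1) (by omega) (by omega))
          (tmono (2*a-1) (2*a+1) (by omega) (by omega) (by omega))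
      linarith
    rcases hne.lt_or_gt with hlt | hlt
    · exact main j1 j2 hj1 hj2 hlt heq
    · exact main j2 j1 hj2 hj1 hlt heq.symm
  obtain ⟨j, hj2, hjn, hgoodj⟩ := hgood
  refine ⟨fun x => if x ≤ t (2*j) then fmax else fmin, ?_, ?_, ?_⟩
  · -- antitone
    intro x _ y _ hxy
    show (if y ≤ t (2*j) then fmax else fmin) ≤ (if x ≤ t (2*j) then fmax else fmin)
    by_cases hy : y ≤ t (2*j)
    · rw [if_pos hy, if_pos (hxy.trans hy)]
    · by_cases hx : x ≤ t (2*j)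
      · rw [if_neg hy, if_pos hx]; exact hf.le
      · rw [if_neg hy, if_neg hx]
  · intro x _
    by_cases hx : x ≤ t (2*j) <;> simp [hx]
  · intro coef hcoef
    have hGanti : AntitoneOn (fun s => ∑ i, coef i * g i s) (Icc pmin pmax) := by
      intro x hx y hy hxy
      exact Finset.sum_le_sum fun i _ =>
        mul_le_mul_of_nonneg_left (hga i hx hy hxy) (hcoef i)
    have hG0 : ∀ x ∈ Icc pmin pmax, 0 ≤ ∑ i, coef i * g i x :=
      fun x hx => Finset.sum_nonneg fun i _ => mul_nonneg (hcoef i) (hg0 i x hx)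
    have hdrop : (∑ i, coef i * g i (t (2*j-1))) - (∑ i, coef i * g i (t (2*j+1)))
        ≤ 2/3 * ((∑ i, coef i * g i (t 2)) - ∑ i, coef i * g i (t (2*(n+2)))) := by
      have h1 : ∑ i, coef i * (g i (t (2*j-1)) - g i (t (2*j+1)))
          ≤ ∑ i, coef i * (2/3 * (g i (t 2) - g i (t (2*(n+2))))) :=
        Finset.sum_le_sum fun i _ =>
          mul_le_mul_of_nonneg_left (hgoodj i) (hcoef i)
      have e1 : ∑ i, coef i * (g i (t (2*j-1)) - g i (t (2*j+1)))
          = (∑ i, coef i * g i (t (2*j-1))) - ∑ i, coef i * g i (t (2*j+1)) := by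
        rw [← Finset.sum_sub_distrib]
        exact Finset.sum_congr rfl fun i _ => by ring
      have e2 : ∑ i, coef i * (2/3 * (g i (t 2) - g i (t (2*(n+2)))))
          = 2/3 * ((∑ i, coef i * g i (t 2)) - ∑ i, coef i * g i (t (2*(n+2)))) := by
        rw [← Finset.sum_sub_distrib, Finset.mul_sum]
        exact Finset.sum_congr rfl fun i _ => by ring
      rw [e1, e2] at h1
      exact h1
    exact stmt11_aux p hp ε pmin pmax fmin fmax n hε hn hn1 hpm hf w hw0 hIw
      t tmono tmem hmeas j hj2 hjn _ (fun x => rfl) _ hGanti hG0 hdrop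
end

section
/- Let p_min = t₀ < t₁ < ... < t_n = p_max, and for each i let g_i be the Uniswap v3 basis function on [t_i, t_{i+1}] (equal to 1/√t_i - 1/√t_{i+1} for p ≤ t_i, 1/√p - 1/√t_{i+1} on [t_i,t_{i+1}], and 0 for p ≥ t_{i+1}), and let g_n ≡ 1. For any non-increasing f : [p_min, p_max] → [f_min, f_max], define g_f(p) = f(p_max)·g_n(p) + Σ_{i=0}^{n-1} [(f(t_i) - f(t_{i+1})) / (1/√t_i - 1/√t_{i+1})] · g_i(p). Then g_f(t_j) = f(t_j) for every j, and for all p ∈ (t_i, t_{i+1}), |f(p) - g_f(p)| ≤ f(t_i) - f(t_{i+1}). -/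
open Set Finset Real

lemma tele_aux (F : ℕ → ℝ) (j : ℕ) :
    ∀ n, j ≤ n → ∑ i ∈ Finset.Ico j n, (F i - F (i+1)) = F j - F n := by
  intro n hn
  induction n, hn using Nat.le_induction with
  | base => simp
  | succ m hm ih => rw [Finset.sum_Ico_succ_top hm, ih]; ring

/-- **Uniswap v3 interpolation.** With ticks
`p_min = t 0 < ⋯ < t n = p_max` (all positive), the Uniswap v3 basis functions `gb i`
on `[tᵢ, tᵢ₊₁]` and the constant function `gn ≡ 1`, the conical combination
`g_f(p) = f(p_max)·gn(p) + Σᵢ [(f(tᵢ) - f(tᵢ₊₁)) / (1/√tᵢ - 1/√tᵢ₊₁)]·gb i (p)`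
interpolates any non-increasing `f : [p_min,p_max] → [f_min,f_max]` at every tick, and
`|f(p) - g_f(p)| ≤ f(tᵢ) - f(tᵢ₊₁)` on each `(tᵢ, tᵢ₊₁)`. -/
theorem stmt14 (pmin pmax fmin fmax : ℝ) (n : ℕ) (hn : 1 ≤ n) (t : ℕ → ℝ)
    (hpos : 0 < pmin)
    (ht : StrictMonoOn t (Set.Icc 0 n)) (ht0 : t 0 = pmin) (htn : t n = pmax)
    (gb : ℕ → ℝ → ℝ)
    (hgb₁ : ∀ i < n, ∀ p ≤ t i, gb i p = 1 / Real.sqrt (t i) - 1 / Real.sqrt (t (i+1)))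
    (hgb₂ : ∀ i < n, ∀ p, t i ≤ p → p ≤ t (i+1) →
      gb i p = 1 / Real.sqrt p - 1 / Real.sqrt (t (i+1)))
    (hgb₃ : ∀ i < n, ∀ p, t (i+1) ≤ p → gb i p = 0)
    (f : ℝ → ℝ) (hanti : AntitoneOn f (Icc pmin pmax))
    (hrange : ∀ x ∈ Icc pmin pmax, f x ∈ Icc fmin fmax)
    (gf : ℝ → ℝ)
    (hgf : ∀ p, gf p = f pmax * 1 + ∑ i ∈ Finset.range n,
      ((f (t i) - f (t (i+1))) / (1 / Real.sqrt (t i) - 1 / Real.sqrt (t (i+1))))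
        * gb i p) :
    (∀ j ≤ n, gf (t j) = f (t j)) ∧
    (∀ i < n, ∀ p ∈ Ioo (t i) (t (i+1)), |f p - gf p| ≤ f (t i) - f (t (i+1))) := by
  have hmono : ∀ i j, i ≤ j → j ≤ n → t i ≤ t j := by
    intro i j hij hj
    exact ht.monotoneOn ⟨Nat.zero_le _, hij.trans hj⟩ ⟨Nat.zero_le _, hj⟩ hij
  have htpos : ∀ i, i ≤ n → 0 < t i := by
    intro i hi
    have := hmono 0 i (Nat.zero_le _) hi
    rw [ht0] at this; linarith
  have hlt : ∀ i, i < n → t i < t (i+1) := by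
    intro i hi
    exact ht ⟨Nat.zero_le _, le_of_lt hi⟩ ⟨Nat.zero_le _, hi⟩ (Nat.lt_succ_self i)
  have hd : ∀ i, i < n → 0 < 1 / Real.sqrt (t i) - 1 / Real.sqrt (t (i+1)) := by
    intro i hi
    have h1 := htpos i hi.le
    have hs1 : 0 < Real.sqrt (t i) := Real.sqrt_pos.mpr h1
    have hsl : Real.sqrt (t i) < Real.sqrt (t (i+1)) := Real.sqrt_lt_sqrt h1.le (hlt i hi)
    have := one_div_lt_one_div_of_lt hs1 hsl
    linarith
  have hmemI : ∀ i, i ≤ n → t i ∈ Icc pmin pmax := by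
    intro i hi
    exact ⟨ht0 ▸ hmono 0 i (Nat.zero_le _) hi, htn ▸ hmono i n hi le_rfl⟩
  have hfanti : ∀ i, i < n → f (t (i+1)) ≤ f (t i) := by
    intro i hi
    exact hanti (hmemI i hi.le) (hmemI (i+1) hi) (hlt i hi).le
  constructor
  · intro j hj
    rw [hgf, Finset.range_eq_Ico, ← Finset.sum_Ico_consecutive _ (Nat.zero_le j) hj]
    have h1 : ∑ i ∈ Finset.Ico 0 j,
        ((f (t i) - f (t (i+1))) / (1 / Real.sqrt (t i) - 1 / Real.sqrt (t (i+1))))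
          * gb i (t j) = 0 := by
      apply Finset.sum_eq_zero
      intro i him
      have hij : i < j := (Finset.mem_Ico.mp him).2
      have hin : i < n := hij.trans_le hj
      rw [hgb₃ i hin (t j) (hmono (i+1) j hij hj), mul_zero]
    have h2 : ∑ i ∈ Finset.Ico j n,
        ((f (t i) - f (t (i+1))) / (1 / Real.sqrt (t i) - 1 / Real.sqrt (t (i+1))))
          * gb i (t j) = ∑ i ∈ Finset.Ico j n, ((fun k => f (t k)) i - (fun k => f (t k)) (i+1)) := by
      apply Finset.sum_congr rfl
      intro i him
      obtain ⟨hji, hin⟩ := Finset.mem_Ico.mp him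
      rw [hgb₁ i hin (t j) (hmono j i hji hin.le)]
      exact div_mul_cancel₀ _ (hd i hin).ne'
    rw [h1, h2, tele_aux _ j n hj]
    simp only [htn]
    ring
  · intro i hi p hp
    obtain ⟨hp1, hp2⟩ := hp
    have hpmem : p ∈ Icc pmin pmax :=
      ⟨ht0 ▸ le_of_lt ((hmono 0 i (Nat.zero_le _) hi.le).trans_lt hp1),
       htn ▸ hp2.le.trans (hmono (i+1) n hi le_rfl)⟩
    set c := (f (t i) - f (t (i+1))) / (1 / Real.sqrt (t i) - 1 / Real.sqrt (t (i+1))) with hc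
    have key : gf p = f (t (i+1)) + c * gb i p := by
      rw [hgf, Finset.range_eq_Ico,
        ← Finset.sum_Ico_consecutive _ (Nat.zero_le i) hi.le,
        Finset.sum_eq_sum_Ico_succ_bot hi]
      have h1 : ∑ k ∈ Finset.Ico 0 i,
          ((f (t k) - f (t (k+1))) / (1 / Real.sqrt (t k) - 1 / Real.sqrt (t (k+1))))
            * gb k p = 0 := by
        apply Finset.sum_eq_zero
        intro k hkm
        have hki : k < i := (Finset.mem_Ico.mp hkm).2
        have hkn : k < n := hki.trans hi
        rw [hgb₃ k hkn p ((hmono (k+1) i hki hi.le).trans hp1.le), mul_zero]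
      have h2 : ∑ k ∈ Finset.Ico (i+1) n,
          ((f (t k) - f (t (k+1))) / (1 / Real.sqrt (t k) - 1 / Real.sqrt (t (k+1))))
            * gb k p = ∑ k ∈ Finset.Ico (i+1) n, ((fun m => f (t m)) k - (fun m => f (t m)) (k+1)) := by
        apply Finset.sum_congr rfl
        intro k hkm
        obtain ⟨hik, hkn⟩ := Finset.mem_Ico.mp hkm
        rw [hgb₁ k hkn p (hp2.le.trans (hmono (i+1) k hik hkn.le))]
        exact div_mul_cancel₀ _ (hd k hkn).ne'
      rw [h1, h2, tele_aux _ (i+1) n hi]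
      simp only [htn]
      ring
    have hg : gb i p = 1 / Real.sqrt p - 1 / Real.sqrt (t (i+1)) :=
      hgb₂ i hi p hp1.le hp2.le
    have hppos : 0 < p := (htpos i hi.le).trans hp1
    have hsp : 0 < Real.sqrt p := Real.sqrt_pos.mpr hppos
    have hsi : 0 < Real.sqrt (t i) := Real.sqrt_pos.mpr (htpos i hi.le)
    have hs1 : Real.sqrt (t i) < Real.sqrt p := Real.sqrt_lt_sqrt (htpos i hi.le).le hp1
    have hs2 : Real.sqrt p < Real.sqrt (t (i+1)) := Real.sqrt_lt_sqrt hppos.le hp2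
    have hgpos : 0 ≤ gb i p := by
      rw [hg]
      have := one_div_lt_one_div_of_lt hsp hs2
      linarith
    have hgle : gb i p ≤ 1 / Real.sqrt (t i) - 1 / Real.sqrt (t (i+1)) := by
      rw [hg]
      have := one_div_lt_one_div_of_lt hsi hs1
      linarith
    have hcnn : 0 ≤ c := div_nonneg (sub_nonneg.mpr (hfanti i hi)) (hd i hi).le
    have hub : c * gb i p ≤ f (t i) - f (t (i+1))  := by
      calc c * gb i p ≤ c * (1 / Real.sqrt (t i) - 1 / Real.sqrt (t (i+1))) :=
            mul_le_mul_of_nonneg_left hgle hcnn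
        _ = f (t i) - f (t (i+1)) := div_mul_cancel₀ _ (hd i hi).ne'
    have hlb : 0 ≤ c * gb i p := mul_nonneg hcnn hgpos
    have hf1 : f (t (i+1)) ≤ f p := hanti hpmem (hmemI (i+1) hi) hp2.le
    have hf2 : f p ≤ f (t i) := hanti (hmemI i hi.le) hpmem hp1.le
    rw [abs_le]
    constructor <;> [skip; skip] <;> linarith [key]
end

section
/- Fix p ≥ 1, ε > 0, and let n = ⌈1/ε^p⌉ with ticks t_i = p_min(1+δ)^i where (1+δ)^n = p_max/p_min. Suppose w is a normalized weight on [p_min, p_max] with ∫_{t_i}^{t_{i+1}} w ≤ C^p/n for all i and some constant C. Then for every non-increasing f : [p_min,p_max] → [f_min, f_max], the function g_f built from the n+1 Uniswap v3 basis functions (as conical combination interpolating f at the ticks) satisfies (∫ w(s)|f(s)-g_f(s)|^p ds)^{1/p} ≤ C·ε·(f_max - f_min). -/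
/-!
Each Uniswap v3 basis function is antitone (constant, then `1/√x` shifted, then zero), so the
conical combination `g_f` is antitone; it also interpolates `f` at every tick. Hence on each tick
interval `[tᵢ, tᵢ₊₁]` both `f` and `g_f` lie between `f(tᵢ₊₁)` and `f(tᵢ)`, giving
`|f - g_f| ≤ f(tᵢ) - f(tᵢ₊₁)` there. As each interval has `w`-mass at most `C^p/n`, the `p`-th
power of the error is at most `(C^p/n) ∑ (f(tᵢ) - f(tᵢ₊₁))^p`, which superadditivity of `x ↦ x^p`
bounds by `(C^p/n) (f(p_min) - f(p_max))^p`; finally `1/n ≤ ε^p`.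
-/

open MeasureTheory Set Finset Real intervalIntegral

theorem Real.sum_rpow_le_rpow_sum {ι : Type*} {p : ℝ} (hp : 1 ≤ p) (s : Finset ι) {a : ι → ℝ}
    (ha : ∀ i ∈ s, 0 ≤ a i) : ∑ i ∈ s, a i ^ p ≤ (∑ i ∈ s, a i) ^ p := by
  induction s using Finset.cons_induction with
  | empty => simp [zero_rpow (by linarith : p ≠ 0)]
  | cons j s hj ih =>
    rw [forall_mem_cons] at ha
    rw [sum_cons, sum_cons]
    calc a j ^ p + ∑ i ∈ s, a i ^ p ≤ a j ^ p + (∑ i ∈ s, a i) ^ p := by gcongr; exact ih ha.2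
      _ ≤ _ := add_rpow_le_rpow_add ha.1 (sum_nonneg ha.2) hp

theorem Finset.sum_Ico_sub_succ {M : Type*} [AddCommGroup M] (F : ℕ → M) {m n : ℕ} (h : m ≤ n) :
    ∑ j ∈ Ico m n, (F j - F (j + 1)) = F m - F n := by
  rw [sum_Ico_eq_sub _ h, sum_range_sub', sum_range_sub', sub_sub_sub_cancel_left]

theorem abs_sub_le_of_antitoneOn_Icc {α : Type*} [Preorder α] {f g : α → ℝ} {a b x : α}
    (hf : AntitoneOn f (Icc a b)) (hg : AntitoneOn g (Icc a b)) (ha : g a = f a)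
    (hb : g b = f b) (hx : x ∈ Icc a b) :
    |f x - g x| ≤ f a - f b := by
  have haI : a ∈ Icc a b := left_mem_Icc.2 (hx.1.trans hx.2)
  have hbI : b ∈ Icc a b := right_mem_Icc.2 (hx.1.trans hx.2)
  rw [abs_le]
  constructor <;> linarith [hf haI hx hx.1, hf hx hbI hx.2, hg haI hx hx.1, hg hx hbI hx.2]

theorem IntervalIntegrable.mul_abs_sub_rpow {w f g : ℝ → ℝ} {a b p : ℝ} (hab : a ≤ b)
    (hp : 0 ≤ p) (hw : IntervalIntegrable w volume a b) (hf : AntitoneOn f (Icc a b))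
    (hg : AntitoneOn g (Icc a b)) (ha : g a = f a) (hb : g b = f b) :
    IntervalIntegrable (fun x => w x * |f x - g x| ^ p) volume a b := by
  rw [intervalIntegrable_iff_integrableOn_Icc_of_le hab] at hw ⊢
  have hmeas : AEStronglyMeasurable (fun x => |f x - g x| ^ p) (volume.restrict (Icc a b)) :=
    (((aemeasurable_restrict_of_antitoneOn measurableSet_Icc hf).sub
      (aemeasurable_restrict_of_antitoneOn measurableSet_Icc hg)).abs.pow_const
        p).aestronglyMeasurable
  refine hw.mul_bdd (c := (f a - f b) ^ p) hmeas
    (ae_restrict_of_forall_mem measurableSet_Icc fun x hx => ?_)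
  rw [norm_of_nonneg (by positivity)]
  exact rpow_le_rpow (abs_nonneg _) (abs_sub_le_of_antitoneOn_Icc hf hg ha hb hx) hp

theorem integral_mul_abs_sub_rpow_le {t : ℕ → ℝ} {n : ℕ} {w f g : ℝ → ℝ} {p K : ℝ}
    (ht : Monotone t) (hp : 1 ≤ p)
    (hw0 : ∀ x ∈ Icc (t 0) (t n), 0 ≤ w x) (hw : IntervalIntegrable w volume (t 0) (t n))
    (hwK : ∀ i < n, ∫ x in t i..t (i + 1), w x ≤ K) (hK : 0 ≤ K)
    (hf : AntitoneOn f (Icc (t 0) (t n))) (hg : AntitoneOn g (Icc (t 0) (t n)))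
    (hfg : ∀ i ≤ n, g (t i) = f (t i)) :
    ∫ x in t 0..t n, w x * |f x - g x| ^ p ≤ K * (f (t 0) - f (t n)) ^ p := by
  have hp0 : 0 ≤ p := by linarith
  have hstep : ∀ i, t i ≤ t (i + 1) := fun i => ht i.le_succ
  have hIcc : ∀ i < n, Icc (t i) (t (i + 1)) ⊆ Icc (t 0) (t n) := fun i hi =>
    Icc_subset_Icc (ht i.zero_le) (ht hi)
  have hΔ : ∀ i < n, 0 ≤ f (t i) - f (t (i + 1)) := fun i hi =>
    sub_nonneg.2 (hf (hIcc i hi (left_mem_Icc.2 (hstep i)))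
      (hIcc i hi (right_mem_Icc.2 (hstep i))) (hstep i))
  have hwi : ∀ i < n, IntervalIntegrable w volume (t i) (t (i + 1)) := fun i hi =>
    hw.mono_set (by rw [uIcc_of_le (hstep i), uIcc_of_le (ht n.zero_le)]; exact hIcc i hi)
  have hint : ∀ i < n,
      IntervalIntegrable (fun x => w x * |f x - g x| ^ p) volume (t i) (t (i + 1)) :=
    fun i hi => (hwi i hi).mul_abs_sub_rpow (hstep i) hp0 (hf.mono (hIcc i hi))
      (hg.mono (hIcc i hi)) (hfg i hi.le) (hfg (i + 1) hi)
  have hpiece : ∀ i < n, ∫ x in t i..t (i + 1), w x * |f x - g x| ^ p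
      ≤ K * (f (t i) - f (t (i + 1))) ^ p := fun i hi =>
    calc ∫ x in t i..t (i + 1), w x * |f x - g x| ^ p
        ≤ ∫ x in t i..t (i + 1), w x * (f (t i) - f (t (i + 1))) ^ p :=
          integral_mono_on (hstep i) (hint i hi) ((hwi i hi).mul_const _) fun x hx =>
            mul_le_mul_of_nonneg_left (rpow_le_rpow (abs_nonneg _)
              (abs_sub_le_of_antitoneOn_Icc (hf.mono (hIcc i hi)) (hg.mono (hIcc i hi))
                (hfg i hi.le) (hfg (i + 1) hi) hx) hp0) (hw0 x (hIcc i hi hx))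
      _ = (∫ x in t i..t (i + 1), w x) * (f (t i) - f (t (i + 1))) ^ p := integral_mul_const _ _
      _ ≤ K * (f (t i) - f (t (i + 1))) ^ p :=
          mul_le_mul_of_nonneg_right (hwK i hi) (rpow_nonneg (hΔ i hi) p)
  calc ∫ x in t 0..t n, w x * |f x - g x| ^ p
      = ∑ i ∈ range n, ∫ x in t i..t (i + 1), w x * |f x - g x| ^ p :=
        (sum_integral_adjacent_intervals hint).symm
    _ ≤ ∑ i ∈ range n, K * (f (t i) - f (t (i + 1))) ^ p :=
        sum_le_sum fun i hi => hpiece i (mem_range.1 hi)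
    _ = K * ∑ i ∈ range n, (f (t i) - f (t (i + 1))) ^ p := (mul_sum _ _ _).symm
    _ ≤ K * (∑ i ∈ range n, (f (t i) - f (t (i + 1)))) ^ p :=
        mul_le_mul_of_nonneg_left
          (sum_rpow_le_rpow_sum hp _ fun i hi => hΔ i (mem_range.1 hi)) hK
    _ = K * (f (t 0) - f (t n)) ^ p := by rw [sum_range_sub']

theorem antitone_of_basis_pieces {α : Type*} [LinearOrder α] {φ g : α → ℝ} {a b : α} (hab : a ≤ b)
    (hφ : AntitoneOn φ (Icc a b))
    (h₁ : ∀ x ≤ a, g x = φ a - φ b) (h₂ : ∀ x, a ≤ x → x ≤ b → g x = φ x - φ b)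
    (h₃ : ∀ x, b ≤ x → g x = 0) : Antitone g := by
  have hclamp : ∀ x, g x = φ (max a (min x b)) - φ b := by
    intro x
    rcases le_total x a with hxa | hax
    · rw [h₁ x hxa, max_eq_left ((min_le_left _ _).trans hxa)]
    rcases le_total x b with hxb | hbx
    · rw [h₂ x hax hxb, min_eq_left hxb, max_eq_right hax]
    · rw [h₃ x hbx, min_eq_right hbx, max_eq_right hab, sub_self]
  intro x y hxy
  rw [hclamp x, hclamp y]
  have hmem : ∀ z, max a (min z b) ∈ Icc a b := fun z =>
    ⟨le_max_left _ _, max_le hab (min_le_right _ _)⟩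
  exact sub_le_sub_right (hφ (hmem x) (hmem y) (max_le_max le_rfl (min_le_min_right _ hxy))) _

theorem antitone_const_add_sum_mul {ι α : Type*} [Preorder α] (c : ℝ) (s : Finset ι)
    {a : ι → ℝ} {g : ι → α → ℝ} (ha : ∀ j ∈ s, 0 ≤ a j) (hg : ∀ j ∈ s, Antitone (g j)) :
    Antitone fun x => c + ∑ j ∈ s, a j * g j x :=
  fun _ _ hxy => add_le_add_right
    (sum_le_sum fun j hj => mul_le_mul_of_nonneg_left (hg j hj hxy) (ha j hj)) c

section Interpolant

variable {t : ℕ → ℝ} {φ : ℝ → ℝ} {gb : ℕ → ℝ → ℝ} {n : ℕ}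

theorem antitone_interpolant (ht : Monotone t) (hφ : AntitoneOn φ (Icc (t 0) (t n)))
    {f : ℝ → ℝ} (hf : AntitoneOn f (Icc (t 0) (t n)))
    (hgb₁ : ∀ j < n, ∀ x ≤ t j, gb j x = φ (t j) - φ (t (j + 1)))
    (hgb₂ : ∀ j < n, ∀ x, t j ≤ x → x ≤ t (j + 1) → gb j x = φ x - φ (t (j + 1)))
    (hgb₃ : ∀ j < n, ∀ x, t (j + 1) ≤ x → gb j x = 0) (c : ℝ) :
    Antitone fun x =>
      c + ∑ j ∈ range n, (f (t j) - f (t (j + 1))) / (φ (t j) - φ (t (j + 1))) * gb j x := by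
  have hmem : ∀ j ≤ n, t j ∈ Icc (t 0) (t n) := fun j hj => ⟨ht j.zero_le, ht hj⟩
  refine antitone_const_add_sum_mul c _ (fun j hj => ?_) fun j hj => ?_ <;>
    obtain hj : j < n := mem_range.1 hj
  · exact div_nonneg (sub_nonneg.2 (hf (hmem j hj.le) (hmem (j + 1) hj) (ht j.le_succ)))
      (sub_nonneg.2 (hφ (hmem j hj.le) (hmem (j + 1) hj) (ht j.le_succ)))
  · exact antitone_of_basis_pieces (ht j.le_succ)
      (hφ.mono (Icc_subset_Icc (ht j.zero_le) (ht hj))) (hgb₁ j hj) (hgb₂ j hj) (hgb₃ j hj)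

theorem sum_coeff_mul_basis_at_tick (F : ℕ → ℝ) (ht : Monotone t)
    (hφ : ∀ j < n, φ (t j) ≠ φ (t (j + 1)))
    (hgb₁ : ∀ j < n, ∀ x ≤ t j, gb j x = φ (t j) - φ (t (j + 1)))
    (hgb₃ : ∀ j < n, ∀ x, t (j + 1) ≤ x → gb j x = 0) {i : ℕ} (hi : i ≤ n) :
    ∑ j ∈ range n, (F j - F (j + 1)) / (φ (t j) - φ (t (j + 1))) * gb j (t i) = F i - F n := by
  rw [← sum_range_add_sum_Ico _ hi, ← sum_Ico_sub_succ F hi]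
  have hbelow : ∀ j ∈ range i,
      (F j - F (j + 1)) / (φ (t j) - φ (t (j + 1))) * gb j (t i) = 0 := by
    intro j hj
    have hj : j < i := mem_range.1 hj
    rw [hgb₃ j (by omega) _ (ht hj), mul_zero]
  have habove : ∀ j ∈ Finset.Ico i n,
      (F j - F (j + 1)) / (φ (t j) - φ (t (j + 1))) * gb j (t i) = F j - F (j + 1) := by
    intro j hj
    obtain ⟨hij, hjn⟩ := Finset.mem_Ico.1 hj
    rw [hgb₁ j hjn _ (ht hij), div_mul_cancel₀ _ (sub_ne_zero.2 (hφ j hjn))]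
  rw [sum_eq_zero hbelow, sum_congr rfl habove, zero_add]

end Interpolant

theorem strictAntiOn_one_div_sqrt : StrictAntiOn (fun x : ℝ => 1 / √x) (Ioi 0) :=
  fun _ hx _ _ hxy => one_div_lt_one_div_of_lt (sqrt_pos.2 hx) (sqrt_lt_sqrt (le_of_lt hx) hxy)

theorem div_natCeil_one_div_rpow_le {C ε p : ℝ} (hC : 0 ≤ C) (hε : 0 < ε) :
    C ^ p / ⌈1 / ε ^ p⌉₊ ≤ (C * ε) ^ p :=
  calc C ^ p / ⌈1 / ε ^ p⌉₊ ≤ C ^ p / (1 / ε ^ p) :=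
        div_le_div_of_nonneg_left (by positivity) (by positivity) (Nat.le_ceil _)
    _ = (C * ε) ^ p := by rw [div_div_eq_mul_div, div_one, mul_rpow hC hε.le]

theorem stmt15_general (p ε pmin pmax fmin fmax δ C : ℝ) (n : ℕ)
    (hp : 1 ≤ p) (hε : 0 < ε) (hn : n = ⌈1 / ε ^ p⌉₊)
    (hpos : 0 < pmin) (hδ : 0 < δ)
    (hgeo : (1 + δ) ^ n = pmax / pmin) (hC : 0 < C)
    (t : ℕ → ℝ) (htdef : ∀ i, t i = pmin * (1 + δ) ^ i)
    (w : ℝ → ℝ) (hw0 : ∀ x ∈ Icc pmin pmax, 0 ≤ w x)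
    (hwint : IntervalIntegrable w volume pmin pmax)
    (hwsmall : ∀ i < n, ∫ x in (t i)..(t (i+1)), w x ≤ C ^ p / (n : ℝ))
    (gb : ℕ → ℝ → ℝ)
    (hgb₁ : ∀ i < n, ∀ x ≤ t i, gb i x = 1 / Real.sqrt (t i) - 1 / Real.sqrt (t (i+1)))
    (hgb₂ : ∀ i < n, ∀ x, t i ≤ x → x ≤ t (i+1) →
      gb i x = 1 / Real.sqrt x - 1 / Real.sqrt (t (i+1)))
    (hgb₃ : ∀ i < n, ∀ x, t (i+1) ≤ x → gb i x = 0)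
    (f : ℝ → ℝ) (hanti : AntitoneOn f (Icc pmin pmax))
    (hrange : ∀ x ∈ Icc pmin pmax, f x ∈ Icc fmin fmax)
    (gf : ℝ → ℝ)
    (hgf : ∀ x, gf x = f pmax * 1 + ∑ i ∈ Finset.range n,
      ((f (t i) - f (t (i+1))) / (1 / Real.sqrt (t i) - 1 / Real.sqrt (t (i+1))))
        * gb i x) :
    (∫ s in pmin..pmax, w s * |f s - gf s| ^ p) ^ (1/p)
      ≤ C * ε * (fmax - fmin) := by
  have ht : StrictMono t := by
    rw [show t = _ from funext htdef]
    exact (pow_right_strictMono₀ (by linarith)).const_mul hpos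
  have ht0 : t 0 = pmin := by simp [htdef]
  have htn : t n = pmax := by rw [htdef, hgeo]; field_simp
  rw [← ht0, ← htn] at hw0 hwint hanti hrange ⊢
  have hmem : ∀ j ≤ n, t j ∈ Icc (t 0) (t n) := fun j hj =>
    ⟨ht.monotone j.zero_le, ht.monotone hj⟩
  have hφ : StrictAntiOn (fun x => 1 / √x) (Icc (t 0) (t n)) :=
    strictAntiOn_one_div_sqrt.mono fun x hx => (ht0 ▸ hpos).trans_le hx.1
  have hgf_anti : Antitone gf := by
    rw [show gf = _ from funext hgf]
    exact antitone_interpolant ht.monotone hφ.antitoneOn hanti hgb₁ hgb₂ hgb₃ _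
  have hinterp : ∀ i ≤ n, gf (t i) = f (t i) := by
    intro i hi
    rw [hgf, sum_coeff_mul_basis_at_tick (φ := fun x => 1 / √x) (fun j => f (t j)) ht.monotone
      (fun j hj => (hφ (hmem j hj.le) (hmem (j + 1) hj) (ht j.lt_succ_self)).ne') hgb₁ hgb₃ hi,
      htn]
    ring
  have herr := integral_mul_abs_sub_rpow_le ht.monotone hp hw0 hwint hwsmall (by positivity) hanti
    (hgf_anti.antitoneOn _) hinterp
  have hosc0 : 0 ≤ f (t 0) - f (t n) :=
    sub_nonneg.2 (hanti (hmem 0 n.zero_le) (hmem n le_rfl) (ht.monotone n.zero_le))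
  have hosc : f (t 0) - f (t n) ≤ fmax - fmin :=
    sub_le_sub (hrange _ (hmem 0 n.zero_le)).2 (hrange _ (hmem n le_rfl)).1
  have hp0 : 0 < p := by linarith
  rw [one_div, rpow_inv_le_iff_of_pos (integral_nonneg (ht.monotone n.zero_le) fun x hx =>
    mul_nonneg (hw0 x hx) (by positivity)) (mul_nonneg (by positivity) (hosc0.trans hosc)) hp0]
  calc _ ≤ C ^ p / n * (f (t 0) - f (t n)) ^ p := herr
    _ ≤ (C * ε) ^ p * (fmax - fmin) ^ p :=
        mul_le_mul (hn ▸ div_natCeil_one_div_rpow_le hC.le hε) (rpow_le_rpow hosc0 hosc hp0.le)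
          (rpow_nonneg hosc0 p) (by positivity)
    _ = (C * ε * (fmax - fmin)) ^ p := (mul_rpow (by positivity) (hosc0.trans hosc)).symm

/-- **Uniswap v3 upper bound.** Fix `p ≥ 1`, `ε > 0`, and
`n = ⌈1/ε^p⌉` with geometric ticks `tᵢ = p_min(1+δ)^i`, `(1+δ)^n = p_max/p_min`.
If a normalized weight `w` assigns measure at most `C^p/n` to each tick interval,
then for every non-increasing `f : [p_min,p_max] → [f_min,f_max]`, the conical
combination `g_f` of the `n+1` Uniswap v3 basis functions interpolating `f` at the
ticks has weighted `ℓ_p` error at most `C·ε·(f_max - f_min)`. -/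
theorem stmt15 (p ε pmin pmax fmin fmax δ C : ℝ) (n : ℕ)
    (hp : 1 ≤ p) (hε : 0 < ε) (hn : n = ⌈1 / ε ^ p⌉₊)
    (hpos : 0 < pmin) (hpp : pmin < pmax) (hδ : 0 < δ)
    (hgeo : (1 + δ) ^ n = pmax / pmin) (hC : 0 < C)
    (t : ℕ → ℝ) (htdef : ∀ i, t i = pmin * (1 + δ) ^ i)
    (w : ℝ → ℝ) (hw0 : ∀ x ∈ Icc pmin pmax, 0 ≤ w x)
    (hwint : IntervalIntegrable w volume pmin pmax)
    (hwnorm : ∫ x in pmin..pmax, w x = 1)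
    (hwsmall : ∀ i < n, ∫ x in (t i)..(t (i+1)), w x ≤ C ^ p / (n : ℝ))
    (gb : ℕ → ℝ → ℝ)
    (hgb₁ : ∀ i < n, ∀ x ≤ t i, gb i x = 1 / Real.sqrt (t i) - 1 / Real.sqrt (t (i+1)))
    (hgb₂ : ∀ i < n, ∀ x, t i ≤ x → x ≤ t (i+1) →
      gb i x = 1 / Real.sqrt x - 1 / Real.sqrt (t (i+1)))
    (hgb₃ : ∀ i < n, ∀ x, t (i+1) ≤ x → gb i x = 0)
    (f : ℝ → ℝ) (hanti : AntitoneOn f (Icc pmin pmax))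
    (hrange : ∀ x ∈ Icc pmin pmax, f x ∈ Icc fmin fmax)
    (gf : ℝ → ℝ)
    (hgf : ∀ x, gf x = f pmax * 1 + ∑ i ∈ Finset.range n,
      ((f (t i) - f (t (i+1))) / (1 / Real.sqrt (t i) - 1 / Real.sqrt (t (i+1))))
        * gb i x) :
    (∫ s in pmin..pmax, w s * |f s - gf s| ^ p) ^ (1/p)
      ≤ C * ε * (fmax - fmin) :=
  stmt15_general p ε pmin pmax fmin fmax δ C n hp hε hn hpos hδ hgeo hC t htdef w hw0 hwint hwsmall
    gb hgb₁ hgb₂ hgb₃ f hanti hrange gf hgf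
end
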